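/- arXiv:1110.3612 — 3 statements merged into one kernel-verified Lean document; each statement's English description precedes it below -/
import Mathlib

section
/- Let φ : ℝ → ℝ be continuously differentiable with compact support. Then for every x1 ∈ ℝ and every fixed x3 ∈ ℝ, the function (ξ1, ξ3) ↦ (x1−ξ1) φ′(ξ1) / ( (x1−ξ1)² + (x3−ξ3)² ) is Lebesgue integrable on ℝ², and ∫_{ℝ²} (x1−ξ1) φ′(ξ1) / ( (x1−ξ1)² + (x3−ξ3)² ) dξ1 dξ3 = 2π φ(x1). -/
/-!
For `a ≠ 0` the Cauchy kernel integrates to `∫ a / (a² + t²) dt = π · sign a`, and it is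
absolutely integrable with `∫ |a| / (a² + t²) dt = π`. Fubini therefore reduces the plane
integral to `π ∫ sign (x₁ - ξ₁) φ'(ξ₁) dξ₁`, and the fundamental theorem of calculus on the two
half-lines `ξ₁ < x₁` and `ξ₁ > x₁` gives `φ(x₁)` from each side.
-/

open MeasureTheory Filter Real Set

lemma div_sq_add_sq_eq {a : ℝ} (ha : a ≠ 0) (t : ℝ) :
    a / (a ^ 2 + t ^ 2) = a⁻¹ * (1 + (a⁻¹ * t) ^ 2)⁻¹ := by
  field_simp

lemma integrable_div_sq_add_sq (a : ℝ) : Integrable fun t : ℝ => a / (a ^ 2 + t ^ 2) := by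
  rcases eq_or_ne a 0 with rfl | ha
  · simp
  · simp_rw [div_sq_add_sq_eq ha]
    exact (integrable_inv_one_add_sq.comp_mul_left' (inv_ne_zero ha)).const_mul a⁻¹

lemma integral_univ_div_sq_add_sq (a : ℝ) :
    ∫ t : ℝ, a / (a ^ 2 + t ^ 2) = π * SignType.sign a := by
  rcases eq_or_ne a 0 with rfl | ha
  · simp
  · simp_rw [div_sq_add_sq_eq ha]
    rw [integral_const_mul, Measure.integral_comp_mul_left (fun t => (1 + t ^ 2)⁻¹),
      integral_univ_inv_one_add_sq, smul_eq_mul, inv_inv, ← self_mul_sign a]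
    field_simp

lemma integral_mul_div_sq_add_sq_sub (c a x : ℝ) :
    ∫ t : ℝ, c * (a / (a ^ 2 + (x - t) ^ 2)) = c * (π * SignType.sign a) := by
  rw [integral_const_mul, integral_sub_left_eq_self (fun t => a / (a ^ 2 + t ^ 2)),
    integral_univ_div_sq_add_sq]

lemma measurable_coe_sign : Measurable fun x : ℝ => (SignType.sign x : ℝ) := by
  refine Monotone.measurable fun a b hab => ?_
  simp only [sign_apply]
  split_ifs <;> norm_num <;> linarith

lemma abs_coe_sign_le_one (x : ℝ) : |(SignType.sign x : ℝ)| ≤ 1 := by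
  rcases lt_trichotomy x 0 with h | rfl | h <;> simp [*]

lemma MeasureTheory.Integrable.sign_mul {α : Type*} [MeasurableSpace α] {μ : Measure α}
    {g : α → ℝ} (hg : Integrable g μ) {h : α → ℝ} (hh : Measurable h) :
    Integrable (fun x => (SignType.sign (h x) : ℝ) * g x) μ :=
  hg.bdd_mul (measurable_coe_sign.comp hh).aestronglyMeasurable
    (ae_of_all _ fun x => abs_coe_sign_le_one (h x))

section CauchyKernel

variable {g : ℝ → ℝ} (x1 x3 : ℝ)

lemma mul_div_sq_add_sq_eq (ξ1 ξ3 : ℝ) :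
    (x1 - ξ1) * g ξ1 / ((x1 - ξ1) ^ 2 + (x3 - ξ3) ^ 2) =
      g ξ1 * ((x1 - ξ1) / ((x1 - ξ1) ^ 2 + (x3 - ξ3) ^ 2)) := by
  rw [mul_comm (x1 - ξ1), mul_div_assoc]

lemma integrable_prod_mul_div_sq_add_sq (hg : Integrable g) :
    Integrable fun ξ : ℝ × ℝ => (x1 - ξ.1) * g ξ.1 / ((x1 - ξ.1) ^ 2 + (x3 - ξ.2) ^ 2) := by
  have hmeas : AEStronglyMeasurable
      (fun ξ : ℝ × ℝ => (x1 - ξ.1) * g ξ.1 / ((x1 - ξ.1) ^ 2 + (x3 - ξ.2) ^ 2))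
      (volume.prod volume) := by
    have hg_fst := hg.aemeasurable.comp_fst (ν := (volume : Measure ℝ))
    exact AEMeasurable.aestronglyMeasurable (by fun_prop)
  refine (integrable_prod_iff hmeas).2 ⟨ae_of_all _ fun ξ1 => ?_, ?_⟩
  · simp_rw [mul_div_sq_add_sq_eq]
    exact ((integrable_div_sq_add_sq _).comp_sub_left x3).const_mul _
  · have hnorm (ξ1 ξ3 : ℝ) : ‖(x1 - ξ1) * g ξ1 / ((x1 - ξ1) ^ 2 + (x3 - ξ3) ^ 2)‖ =
        |g ξ1| * (|x1 - ξ1| / (|x1 - ξ1| ^ 2 + (x3 - ξ3) ^ 2)) := by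
      rw [mul_div_sq_add_sq_eq, norm_mul, norm_div, Real.norm_eq_abs, Real.norm_eq_abs,
        sq_abs, Real.norm_of_nonneg (by positivity)]
    simp_rw [hnorm, integral_mul_div_sq_add_sq_sub]
    refine ((hg.norm.const_mul π).sign_mul (h := fun ξ1 => |x1 - ξ1|) (by fun_prop)).congr
      (ae_of_all _ fun ξ1 => ?_)
    simp only [Real.norm_eq_abs]
    ring

lemma integral_prod_mul_div_sq_add_sq (hg : Integrable g) :
    ∫ ξ : ℝ × ℝ, (x1 - ξ.1) * g ξ.1 / ((x1 - ξ.1) ^ 2 + (x3 - ξ.2) ^ 2) =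
      π * ∫ ξ1, (SignType.sign (x1 - ξ1) : ℝ) * g ξ1 := by
  rw [Measure.volume_eq_prod, integral_prod _ (integrable_prod_mul_div_sq_add_sq x1 x3 hg),
    ← integral_const_mul]
  simp_rw [mul_div_sq_add_sq_eq, integral_mul_div_sq_add_sq_sub]
  congr with ξ1
  ring

end CauchyKernel

lemma HasCompactSupport.integral_sign_sub_mul_deriv {φ : ℝ → ℝ} (hφ : ContDiff ℝ 1 φ)
    (hsupp : HasCompactSupport φ) (x : ℝ) :
    ∫ ξ, (SignType.sign (x - ξ) : ℝ) * deriv φ ξ = 2 * φ x := by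
  have hint : Integrable fun ξ => (SignType.sign (x - ξ) : ℝ) * deriv φ ξ :=
    ((hφ.continuous_deriv le_rfl).integrable_of_hasCompactSupport hsupp.deriv).sign_mul
      (h := (x - ·)) (by fun_prop)
  have hleft : ∫ ξ in Iic x, (SignType.sign (x - ξ) : ℝ) * deriv φ ξ = φ x := by
    rw [integral_Iic_eq_integral_Iio, ← hsupp.integral_Iic_deriv_eq hφ x,
      integral_Iic_eq_integral_Iio]
    refine setIntegral_congr_fun measurableSet_Iio fun ξ hξ => ?_
    simp [sign_pos (sub_pos.2 (mem_Iio.1 hξ))]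
  have hright : ∫ ξ in Ioi x, (SignType.sign (x - ξ) : ℝ) * deriv φ ξ = φ x := by
    rw [← neg_neg (φ x), ← hsupp.integral_Ioi_deriv_eq hφ x, ← integral_neg]
    refine setIntegral_congr_fun measurableSet_Ioi fun ξ hξ => ?_
    simp [sign_neg (sub_neg.2 (mem_Ioi.1 hξ))]
  rw [← intervalIntegral.integral_Iic_add_Ioi hint.integrableOn hint.integrableOn, hleft, hright]
  ring

/-- Specialisation of the planar identity `Q₁(∂φ/∂x₁) + Q₃(∂φ/∂x₃) = 2φ` to a `C¹`
compactly-supported function `φ` of `x₁` only: the kernel `(x₁-ξ₁)/((x₁-ξ₁)²+(x₃-ξ₃)²)`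
convolved (over the plane) with `φ'` gives `2π φ(x₁)`. -/
theorem stmt3 (φ : ℝ → ℝ) (hφ : ContDiff ℝ 1 φ) (hsupp : HasCompactSupport φ)
    (x1 x3 : ℝ) :
    Integrable (fun ξ : ℝ × ℝ =>
      (x1 - ξ.1) * deriv φ ξ.1 / ((x1 - ξ.1) ^ 2 + (x3 - ξ.2) ^ 2)) ∧
    (∫ ξ : ℝ × ℝ, (x1 - ξ.1) * deriv φ ξ.1 / ((x1 - ξ.1) ^ 2 + (x3 - ξ.2) ^ 2)) =
      2 * Real.pi * φ x1 := by
  have hderiv : Integrable (deriv φ) :=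
    (hφ.continuous_deriv le_rfl).integrable_of_hasCompactSupport hsupp.deriv
  refine ⟨integrable_prod_mul_div_sq_add_sq x1 x3 hderiv, ?_⟩
  rw [integral_prod_mul_div_sq_add_sq x1 x3 hderiv, hsupp.integral_sign_sub_mul_deriv hφ]
  ring
end

section
/- Let φ : ℝ → ℝ be continuously differentiable with compact support. Then for every x1 ∈ ℝ and every fixed x3 ∈ ℝ, lim_{R→∞} ∫_{−R}^{R} ( ∫_{−∞}^{∞} (x3−ξ3) φ′(ξ1) / ( (x1−ξ1)² + (x3−ξ3)² ) dξ1 ) dξ3 = 0, where the inner integral over ξ1 is an absolutely convergent Lebesgue integral for each ξ3. -/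
open MeasureTheory Filter Real Set

namespace Stmt4Aux

/-- Positivity of the denominator when `s ≠ 0`. -/
lemma den_pos {s : ℝ} (hs0 : s ≠ 0) (x1 y : ℝ) : 0 < (x1 - y) ^ 2 + s ^ 2 :=
  add_pos_of_nonneg_of_pos (sq_nonneg _) (by positivity)

/-- The Cauchy-type kernel in one variable is integrable and its integral is `π/|s|`. -/
lemma ker_int {s : ℝ} (hs0 : s ≠ 0) (x1 : ℝ) :
    Integrable (fun y : ℝ => ((x1 - y) ^ 2 + s ^ 2)⁻¹) ∧
      ∫ y : ℝ, ((x1 - y) ^ 2 + s ^ 2)⁻¹ = π / |s| := by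
  have heq : (fun y : ℝ => (y ^ 2 + s ^ 2)⁻¹)
      = fun y : ℝ => (s ^ 2)⁻¹ * (1 + (s⁻¹ * y) ^ 2)⁻¹ := by
    funext y
    rw [← mul_inv]
    congr 1
    field_simp
    ring
  have hint : Integrable (fun y : ℝ => (y ^ 2 + s ^ 2)⁻¹) := by
    rw [heq]
    exact ((MeasureTheory.integrable_comp_mul_left_iff (fun u : ℝ => (1 + u ^ 2)⁻¹)
      (inv_ne_zero hs0)).2 integrable_inv_one_add_sq).const_mul _
  have hval : ∫ y : ℝ, (y ^ 2 + s ^ 2)⁻¹ = π / |s| := by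
    rw [heq, MeasureTheory.integral_const_mul, MeasureTheory.Measure.integral_comp_mul_left
      (fun u : ℝ => (1 + u ^ 2)⁻¹) s⁻¹, integral_univ_inv_one_add_sq]
    rw [inv_inv, smul_eq_mul, ← sq_abs]
    have habs : |s| ≠ 0 := abs_ne_zero.2 hs0
    field_simp
  refine ⟨hint.comp_sub_left x1, ?_⟩
  rw [integral_sub_left_eq_self (fun y : ℝ => (y ^ 2 + s ^ 2)⁻¹) volume x1]
  exact hval

variable {ψ : ℝ → ℝ}

/-- Integrability of the integrand in `ξ₁` for `s ≠ 0`. -/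
lemma integrand_integrable (hc : Continuous ψ) (hsp : HasCompactSupport ψ)
    {s : ℝ} (hs0 : s ≠ 0) (x1 : ℝ) :
    Integrable (fun y : ℝ => s * ψ y / ((x1 - y) ^ 2 + s ^ 2)) := by
  have hden : ∀ y : ℝ, ((x1 - y) ^ 2 + s ^ 2) ≠ 0 := fun y => (den_pos hs0 x1 y).ne'
  have hcont : Continuous fun y : ℝ => s * ψ y / ((x1 - y) ^ 2 + s ^ 2) :=
    (continuous_const.mul hc).div (by continuity) hden
  have hsupp2 : HasCompactSupport fun y : ℝ => s * ψ y / ((x1 - y) ^ 2 + s ^ 2) := by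
    apply hsp.mono
    intro y hy
    simp only [Function.mem_support, ne_eq] at hy ⊢
    intro h0
    apply hy
    rw [h0, mul_zero, zero_div]
  exact hcont.integrable_of_hasCompactSupport hsupp2

/-- The inner integral, as a function of the numerator parameter `c`. -/
noncomputable def kerInt (ψ : ℝ → ℝ) (x1 c : ℝ) : ℝ :=
  ∫ y : ℝ, c * ψ y / ((x1 - y) ^ 2 + c ^ 2)

lemma kerInt_zero (x1 : ℝ) : kerInt ψ x1 0 = 0 := by
  unfold kerInt
  simp

lemma kerInt_neg (x1 c : ℝ) : kerInt ψ x1 (-c) = -kerInt ψ x1 c := by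
  unfold kerInt
  rw [← MeasureTheory.integral_neg]
  congr 1
  funext y
  rw [neg_sq]
  ring

/-- Uniform bound `|kerInt| ≤ π * M` where `M` bounds `‖ψ‖`. -/
lemma kerInt_bound {M : ℝ} (hM : ∀ y, ‖ψ y‖ ≤ M)
    (x1 c : ℝ) : ‖kerInt ψ x1 c‖ ≤ π * M := by
  have hM0 : 0 ≤ M := le_trans (norm_nonneg _) (hM 0)
  rcases eq_or_ne c 0 with rfl | hc0
  · rw [kerInt_zero]
    simp only [norm_zero]
    positivity
  · obtain ⟨hki, hkv⟩ := ker_int hc0 x1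
    have hgint : Integrable (fun y : ℝ => |c| * M * ((x1 - y) ^ 2 + c ^ 2)⁻¹) :=
      hki.const_mul _
    have hbound : ∀ y : ℝ, ‖c * ψ y / ((x1 - y) ^ 2 + c ^ 2)‖
        ≤ |c| * M * ((x1 - y) ^ 2 + c ^ 2)⁻¹ := by
      intro y
      have hd := den_pos hc0 x1 y
      have heq : ‖c * ψ y / ((x1 - y) ^ 2 + c ^ 2)‖
          = |c| * ‖ψ y‖ * ((x1 - y) ^ 2 + c ^ 2)⁻¹ := by
        rw [norm_div, norm_mul, Real.norm_eq_abs c, Real.norm_eq_abs ((x1 - y) ^ 2 + c ^ 2),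
          abs_of_pos hd, div_eq_mul_inv]
      rw [heq]
      gcongr
      exact hM y
    have h1 : ‖kerInt ψ x1 c‖ ≤ ∫ y : ℝ, |c| * M * ((x1 - y) ^ 2 + c ^ 2)⁻¹ :=
      MeasureTheory.norm_integral_le_of_norm_le hgint (Eventually.of_forall hbound)
    rw [MeasureTheory.integral_const_mul, hkv] at h1
    have habs : |c| ≠ 0 := abs_ne_zero.2 hc0
    calc ‖kerInt ψ x1 c‖ ≤ |c| * M * (π / |c|) := h1
      _ = π * M := by field_simp

/-- Decay bound `|kerInt| ≤ (∫‖ψ‖)/|c|`. -/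
lemma kerInt_far (hc : Continuous ψ) (hsp : HasCompactSupport ψ) (x1 : ℝ)
    {c : ℝ} (hc0 : c ≠ 0) :
    ‖kerInt ψ x1 c‖ ≤ (∫ y : ℝ, ‖ψ y‖) / |c| := by
  have hψint : Integrable ψ := hc.integrable_of_hasCompactSupport hsp
  have hgint : Integrable (fun y : ℝ => ‖ψ y‖ / |c|) := hψint.norm.div_const _
  have hbound : ∀ y : ℝ, ‖c * ψ y / ((x1 - y) ^ 2 + c ^ 2)‖ ≤ ‖ψ y‖ / |c| := by
    intro y
    have hd := den_pos hc0 x1 y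
    have hcpos : (0 : ℝ) < |c| := abs_pos.2 hc0
    have heq : ‖c * ψ y / ((x1 - y) ^ 2 + c ^ 2)‖
        = |c| * ‖ψ y‖ / ((x1 - y) ^ 2 + c ^ 2) := by
      rw [norm_div, norm_mul, Real.norm_eq_abs c, Real.norm_eq_abs ((x1 - y) ^ 2 + c ^ 2),
        abs_of_pos hd]
    rw [heq, div_le_div_iff₀ hd hcpos]
    nlinarith [sq_abs c, sq_nonneg (x1 - y), norm_nonneg (ψ y), hcpos.le]
  have h1 : ‖kerInt ψ x1 c‖ ≤ ∫ y : ℝ, ‖ψ y‖ / |c| :=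
    MeasureTheory.norm_integral_le_of_norm_le hgint (Eventually.of_forall hbound)
  rwa [MeasureTheory.integral_div] at h1

/-- The shifted inner integral, viewed as a function of `s`, is strongly measurable. -/
lemma kerInt_meas (hc : Continuous ψ) (x1 : ℝ) :
    StronglyMeasurable (fun s : ℝ => kerInt ψ x1 (-s)) := by
  have hF : StronglyMeasurable (Function.uncurry fun (s : ℝ) (y : ℝ) =>
      (-s) * ψ y / ((x1 - y) ^ 2 + (-s) ^ 2)) := by
    apply Measurable.stronglyMeasurable
    have hnum : Measurable fun p : ℝ × ℝ => (-p.1) * ψ p.2 :=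
      (measurable_fst.neg).mul (hc.measurable.comp measurable_snd)
    have hden : Measurable fun p : ℝ × ℝ => (x1 - p.2) ^ 2 + (-p.1) ^ 2 := by
      measurability
    exact hnum.div hden
  exact hF.integral_prod_right'

/-- The shifted inner integral is interval integrable on every interval. -/
lemma kerInt_intervalIntegrable (hc : Continuous ψ) {M : ℝ} (hM : ∀ y, ‖ψ y‖ ≤ M)
    (x1 a b : ℝ) :
    IntervalIntegrable (fun s : ℝ => kerInt ψ x1 (-s)) volume a b := by
  rw [intervalIntegrable_iff]
  apply Measure.integrableOn_of_bounded (M := π * M)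
  · rw [Set.uIoc]
    exact measure_Ioc_lt_top.ne
  · exact (kerInt_meas hc x1).aestronglyMeasurable
  · filter_upwards with s
    exact kerInt_bound hM x1 (-s)

/-- The integral of the odd function `s ↦ kerInt ψ x1 (-s)` over a symmetric interval vanishes. -/
lemma kerInt_symm_zero (x1 A : ℝ) :
    ∫ s in (-A)..A, kerInt ψ x1 (-s) = 0 := by
  have h1 := intervalIntegral.integral_comp_neg (a := -A) (b := A)
    (fun s : ℝ => kerInt ψ x1 (-s))
  rw [neg_neg] at h1
  have h3 : (∫ x in (-A)..A, kerInt ψ x1 (-(-x)))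
      = -∫ x in (-A)..A, kerInt ψ x1 (-x) := by
    rw [← intervalIntegral.integral_neg]
    congr 1
    funext x
    rw [neg_neg, ← neg_neg (kerInt ψ x1 x), ← kerInt_neg]
  rw [h3] at h1
  linarith

end Stmt4Aux

/-- The identity `Q₃(∂φ/∂x₁) = 0` for a `C¹` compactly-supported function `φ` of `x₁` only:
the improper iterated integral (transverse variable truncated to a symmetric window of
half-width `R`) of the kernel `(x₃-ξ₃)/((x₁-ξ₁)²+(x₃-ξ₃)²)` against `φ'` tends to `0`,
the inner integral over `ξ₁` being an absolutely convergent Lebesgue integral for each `ξ₃`. -/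
theorem stmt4 (φ : ℝ → ℝ) (hφ : ContDiff ℝ 1 φ) (hsupp : HasCompactSupport φ)
    (x1 x3 : ℝ) :
    (∀ ξ3 : ℝ, Integrable (fun ξ1 : ℝ =>
        (x3 - ξ3) * deriv φ ξ1 / ((x1 - ξ1) ^ 2 + (x3 - ξ3) ^ 2))) ∧
    Tendsto (fun R : ℝ =>
        ∫ ξ3 in (-R)..R,
          ∫ ξ1 : ℝ, (x3 - ξ3) * deriv φ ξ1 / ((x1 - ξ1) ^ 2 + (x3 - ξ3) ^ 2))
      atTop (nhds 0) := by
  have hψc : Continuous (deriv φ) := hφ.continuous_deriv le_rfl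
  have hψs : HasCompactSupport (deriv φ) := hsupp.deriv
  -- a uniform bound on ‖deriv φ‖
  obtain ⟨y0, hy0⟩ := (hψc.norm).exists_forall_ge_of_hasCompactSupport hψs.norm
  set M : ℝ := ‖deriv φ y0‖ with hMdef
  have hM : ∀ y, ‖deriv φ y‖ ≤ M := hy0
  set C : ℝ := ∫ y : ℝ, ‖deriv φ y‖ with hCdef
  have hC0 : 0 ≤ C := integral_nonneg fun y => norm_nonneg _
  constructor
  · intro ξ3
    rcases eq_or_ne (x3 - ξ3) 0 with h0 | h0
    · have hz : (fun ξ1 : ℝ => (x3 - ξ3) * deriv φ ξ1 / ((x1 - ξ1) ^ 2 + (x3 - ξ3) ^ 2))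
          = fun _ : ℝ => (0 : ℝ) := by
        funext ξ1
        rw [h0, zero_mul, zero_div]
      rw [hz]
      exact integrable_zero _ _ _
    · exact Stmt4Aux.integrand_integrable hψc hψs h0 x1
  · -- rewrite the truncated integral as an integral of the odd function far away
    have hrw : ∀ R : ℝ,
        (∫ ξ3 in (-R)..R,
            ∫ ξ1 : ℝ, (x3 - ξ3) * deriv φ ξ1 / ((x1 - ξ1) ^ 2 + (x3 - ξ3) ^ 2))
          = ∫ s in (R + x3)..(R - x3), Stmt4Aux.kerInt (deriv φ) x1 (-s) := by
      intro R
      have e1 : (∫ ξ3 in (-R)..R,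
            ∫ ξ1 : ℝ, (x3 - ξ3) * deriv φ ξ1 / ((x1 - ξ1) ^ 2 + (x3 - ξ3) ^ 2))
          = ∫ ξ3 in (-R)..R,
              (fun s : ℝ => Stmt4Aux.kerInt (deriv φ) x1 (-s)) (ξ3 - x3) := by
        apply intervalIntegral.integral_congr
        intro ξ3 _
        show _ = Stmt4Aux.kerInt (deriv φ) x1 (-(ξ3 - x3))
        unfold Stmt4Aux.kerInt
        simp only [neg_sub]
      rw [e1, intervalIntegral.integral_comp_sub_right
        (fun s : ℝ => Stmt4Aux.kerInt (deriv φ) x1 (-s)) x3]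
      have hii : ∀ a b : ℝ, IntervalIntegrable
          (fun s : ℝ => Stmt4Aux.kerInt (deriv φ) x1 (-s)) volume a b :=
        fun a b => Stmt4Aux.kerInt_intervalIntegrable hψc hM x1 a b
      have hsplit := intervalIntegral.integral_add_adjacent_intervals
        (hii (-(R + x3)) (R + x3)) (hii (R + x3) (R - x3))
      have hz := Stmt4Aux.kerInt_symm_zero (ψ := deriv φ) x1 (R + x3)
      have hlim : -R - x3 = -(R + x3) := by ring
      rw [hlim, ← hsplit, hz, zero_add]
    have hbig : ∀ᶠ R : ℝ in atTop,
        ‖∫ s in (R + x3)..(R - x3), Stmt4Aux.kerInt (deriv φ) x1 (-s)‖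
          ≤ C / (R - |x3|) * (2 * |x3|) := by
      filter_upwards [eventually_ge_atTop (|x3| + 1)] with R hR
      have hpos : 0 < R - |x3| := by linarith
      have hb : ∀ s ∈ Set.uIoc (R + x3) (R - x3),
          ‖Stmt4Aux.kerInt (deriv φ) x1 (-s)‖ ≤ C / (R - |x3|) := by
        intro s hs
        have hmin : R - |x3| ≤ min (R + x3) (R - x3) := by
          apply le_min
          · have := neg_abs_le x3
            linarith
          · have := le_abs_self x3
            linarith
        have hslb : R - |x3| < s := lt_of_le_of_lt hmin hs.1
        have hs0 : s ≠ 0 := ne_of_gt (hpos.trans hslb)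
        have hsn : -s ≠ 0 := neg_ne_zero.2 hs0
        have h1 : ‖Stmt4Aux.kerInt (deriv φ) x1 (-s)‖ ≤ C / |(-s)| :=
          Stmt4Aux.kerInt_far hψc hψs x1 hsn
        have h2 : C / |(-s)| ≤ C / (R - |x3|) := by
          have habs : R - |x3| ≤ |(-s)| := by
            rw [abs_neg, abs_of_pos (hpos.trans hslb)]
            exact hslb.le
          gcongr
        exact h1.trans h2
      have h3 := intervalIntegral.norm_integral_le_of_norm_le_const
        (C := C / (R - |x3|)) (a := R + x3) (b := R - x3)
        (f := fun s : ℝ => Stmt4Aux.kerInt (deriv φ) x1 (-s)) hb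
      calc ‖∫ s in (R + x3)..(R - x3), Stmt4Aux.kerInt (deriv φ) x1 (-s)‖
          ≤ C / (R - |x3|) * |(R - x3) - (R + x3)| := h3
        _ = C / (R - |x3|) * (2 * |x3|) := by
            rw [show (R - x3) - (R + x3) = -(2 * x3) by ring, abs_neg, abs_mul, abs_two]
    have hlim0 : Tendsto (fun R : ℝ => C / (R - |x3|) * (2 * |x3|)) atTop (nhds 0) := by
      have h1 : Tendsto (fun R : ℝ => R - |x3|) atTop atTop :=
        tendsto_atTop_add_const_right atTop (-|x3|) tendsto_id
      have h2 : Tendsto (fun R : ℝ => C / (R - |x3|)) atTop (nhds 0) :=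
        tendsto_const_nhds.div_atTop h1
      simpa using h2.mul_const (2 * |x3|)
    have := squeeze_zero_norm' hbig hlim0
    apply Tendsto.congr' ?_ this
    filter_upwards with R
    exact (hrw R).symm
end

section
/- For all real a > 0 and x1 > 0, lim_{ε→0⁺} ∫_{{ξ < 0 : |ξ + a| > ε}} √(−a/ξ) / ( (x1 − ξ)(ξ + a) ) dξ = π √(a/x1) / (x1 + a), where for ξ < 0 the quantity −a/ξ is positive so the square root is real, the integrand is integrable near ξ = 0⁻ and at −∞, and the limit is the Cauchy principal value with respect to the simple pole at ξ = −a. -/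
/-!
By partial fractions the integrand is `(√(-a/ξ)/(x₁-ξ) + √(-a/ξ)/(ξ+a)) / (x₁+a)`, and with
`t = √(-ξ)` the two pieces have the antiderivatives `-2 √(a/x₁) arctan (t/√x₁)` and
`log |ξ+a| - 2 log (√a + t)`. Their sum `F` is monotone on each side of the pole, so the
excised integral is `F(-a-ε) - F(-∞) + F(0) - F(-a+ε)`. The singularity of `F` at `-a` is
`log |ξ+a|/(x₁+a)`, which is even about the pole, so `F(-a-ε) - F(-a+ε) → 0` and the
principal value is `F(0) - F(-∞) = π √(a/x₁)/(x₁+a)`.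
-/

open MeasureTheory Filter Real Set Topology

theorem integrableOn_Iio_deriv_of_nonpos {F f : ℝ → ℝ} {c L : ℝ}
    (hcont : ContinuousWithinAt F (Iic c) c) (hderiv : ∀ x ∈ Iio c, HasDerivAt F (f x) x)
    (hf : ∀ x ∈ Iio c, f x ≤ 0) (hL : Tendsto F atBot (𝓝 L)) : IntegrableOn f (Iio c) := by
  have hcont' : ContinuousWithinAt (fun x => F (-x)) (Ici (-c)) (-c) := by
    rw [← neg_neg c] at hcont
    exact hcont.comp continuous_neg.continuousWithinAt fun x hx => neg_le_neg (mem_Ici.1 hx)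
  have hint := integrableOn_Ioi_deriv_of_nonneg hcont'
    (fun x hx =>
      ((hderiv (-x) (neg_lt.2 (mem_Ioi.1 hx))).comp x (hasDerivAt_neg x)).congr_deriv (by ring))
    (fun x hx => neg_nonneg.2 (hf (-x) (neg_lt.2 (mem_Ioi.1 hx)))) (hL.comp tendsto_neg_atTop_atBot)
  simpa using hint.comp_neg_Iio.neg

theorem integral_Iio_of_hasDerivAt_of_nonpos {F f : ℝ → ℝ} {c L : ℝ}
    (hcont : ContinuousWithinAt F (Iic c) c) (hderiv : ∀ x ∈ Iio c, HasDerivAt F (f x) x)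
    (hf : ∀ x ∈ Iio c, f x ≤ 0) (hL : Tendsto F atBot (𝓝 L)) : ∫ x in Iio c, f x = F c - L := by
  rw [← integral_Iic_eq_integral_Iio]
  refine integral_Iic_of_hasDerivAt_of_tendsto hcont hderiv ?_ hL
  exact (integrableOn_Iic_iff_integrableOn_Iio).2
    (integrableOn_Iio_deriv_of_nonpos hcont hderiv hf hL)

theorem setOf_lt_and_lt_abs_sub {b p ε : ℝ} (h : p - ε ≤ b) :
    {x | x < b ∧ ε < |x - p|} = Iio (p - ε) ∪ Ioo (p + ε) b := by
  ext x
  simp only [mem_ofPred_eq, mem_union, mem_Iio, mem_Ioo, lt_abs]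
  constructor
  · rintro ⟨hxb, h | h⟩
    · exact Or.inr ⟨by linarith, hxb⟩
    · exact Or.inl (by linarith)
  · rintro (h | ⟨h, hxb⟩)
    · exact ⟨by linarith, Or.inr (by linarith)⟩
    · exact ⟨hxb, Or.inl (by linarith)⟩

theorem setIntegral_excised_eq_of_hasDerivAt {F f : ℝ → ℝ} {p b L ε : ℝ}
    (hε : 0 < ε) (hεb : p + ε < b)
    (hcont : ContinuousOn F (Iic b \ {p})) (hderiv : ∀ x ∈ Iio b \ {p}, HasDerivAt F (f x) x)
    (hneg : ∀ x ∈ Iio p, f x ≤ 0) (hpos : ∀ x ∈ Ioo p b, 0 ≤ f x)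
    (hL : Tendsto F atBot (𝓝 L)) :
    ∫ x in {x | x < b ∧ ε < |x - p|}, f x = F (p - ε) - F (p + ε) + (F b - L) := by
  have hleft : Iic (p - ε) ⊆ Iic b \ {p} := fun x hx => by
    simp only [Set.mem_sdiff, mem_Iic, mem_singleton_iff] at hx ⊢
    exact ⟨by linarith, by linarith⟩
  have hright : Icc (p + ε) b ⊆ Iic b \ {p} := fun x hx => by
    simp only [Set.mem_sdiff, mem_Iic, mem_Icc, mem_singleton_iff] at hx ⊢
    exact ⟨hx.2, by linarith⟩
  have hcontL : ContinuousWithinAt F (Iic (p - ε)) (p - ε) :=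
    (hcont _ (hleft (mem_Iic.2 le_rfl))).mono hleft
  have hderivL : ∀ x ∈ Iio (p - ε), HasDerivAt F (f x) x := fun x hx => by
    simp only [mem_Iio] at hx
    exact hderiv x ⟨mem_Iio.2 (by linarith), ne_of_lt (by linarith)⟩
  have hnegL : ∀ x ∈ Iio (p - ε), f x ≤ 0 := fun x hx =>
    hneg x (mem_Iio.2 (by linarith [mem_Iio.1 hx]))
  have hderivR : ∀ x ∈ Ioo (p + ε) b, HasDerivAt F (f x) x := fun x hx =>
    hderiv x ⟨hx.2, ne_of_gt (by linarith [hx.1])⟩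
  have hposR : ∀ x ∈ Ioo (p + ε) b, 0 ≤ f x := fun x hx => hpos x ⟨by linarith [hx.1], hx.2⟩
  have hintR : IntegrableOn f (Ioc (p + ε) b) :=
    intervalIntegral.integrableOn_deriv_of_nonneg (hcont.mono hright) hderivR hposR
  have hvalR : ∫ x in Ioo (p + ε) b, f x = F b - F (p + ε) := by
    rw [← integral_Ioc_eq_integral_Ioo, ← intervalIntegral.integral_of_le hεb.le]
    exact intervalIntegral.integral_eq_sub_of_hasDerivAt_of_le hεb.le (hcont.mono hright) hderivR
      ((intervalIntegrable_iff_integrableOn_Ioc_of_le hεb.le).2 hintR)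
  have hdisj : Disjoint (Iio (p - ε)) (Ioo (p + ε) b) :=
    disjoint_left.2 fun x hxL hxR => by linarith [mem_Iio.1 hxL, hxR.1]
  rw [setOf_lt_and_lt_abs_sub (by linarith), setIntegral_union hdisj measurableSet_Ioo
    (integrableOn_Iio_deriv_of_nonpos hcontL hderivL hnegL hL)
    (hintR.mono_set Ioo_subset_Ioc_self),
    integral_Iio_of_hasDerivAt_of_nonpos hcontL hderivL hnegL hL, hvalR]
  ring

theorem tendsto_principalValue_of_hasDerivAt {F f : ℝ → ℝ} {p b L : ℝ} (hpb : p < b)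
    (hcont : ContinuousOn F (Iic b \ {p})) (hderiv : ∀ x ∈ Iio b \ {p}, HasDerivAt F (f x) x)
    (hneg : ∀ x ∈ Iio p, f x ≤ 0) (hpos : ∀ x ∈ Ioo p b, 0 ≤ f x)
    (hL : Tendsto F atBot (𝓝 L))
    (hjump : Tendsto (fun ε => F (p - ε) - F (p + ε)) (𝓝[>] 0) (𝓝 0)) :
    Tendsto (fun ε => ∫ x in {x | x < b ∧ ε < |x - p|}, f x) (𝓝[>] 0) (𝓝 (F b - L)) := by
  have hlim := hjump.add_const (F b - L)
  rw [zero_add] at hlim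
  refine hlim.congr' ?_
  filter_upwards [Ioo_mem_nhdsGT (sub_pos.2 hpb)] with ε hε
  exact (setIntegral_excised_eq_of_hasDerivAt hε.1 (by linarith [hε.2]) hcont hderiv hneg hpos
    hL).symm

theorem tendsto_sub_symm_of_eq_add_log {F G : ℝ → ℝ} {p κ : ℝ} (hG : ContinuousAt G p)
    (hF : ∀ x, F x = G x + κ * log (x - p)) :
    Tendsto (fun ε => F (p - ε) - F (p + ε)) (𝓝 0) (𝓝 0) := by
  have hsymm : ∀ ε, F (p - ε) - F (p + ε) = G (p - ε) - G (p + ε) := fun ε => by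
    rw [hF, hF, show p - ε - p = -ε by ring, show p + ε - p = ε by ring, log_neg_eq_log]
    ring
  simp_rw [hsymm]
  have hm : Tendsto (fun ε => p - ε) (𝓝 0) (𝓝 p) := by
    simpa using (tendsto_id (x := 𝓝 (0 : ℝ))).const_sub p
  have hp : Tendsto (fun ε => p + ε) (𝓝 0) (𝓝 p) := by
    simpa using (tendsto_id (x := 𝓝 (0 : ℝ))).const_add p
  simpa using (hG.tendsto.comp hm).sub (hG.tendsto.comp hp)

noncomputable def arctanTerm (a x1 ξ : ℝ) : ℝ := -2 * (√a / √x1) * arctan (√(-ξ) / √x1)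

/-- `Real.log` is `log |·|`, so this is one formula on both sides of the pole `ξ = -a`. -/
noncomputable def logTerm (a ξ : ℝ) : ℝ := log (ξ + a) - 2 * log (√a + √(-ξ))

theorem sqrt_neg_div_eq {a ξ : ℝ} (hξ : ξ < 0) : √(-a / ξ) = √a / √(-ξ) := by
  rw [← neg_div_neg_eq, neg_neg, sqrt_div' a (neg_nonneg.2 hξ.le)]

theorem hasDerivAt_arctanTerm {a x1 ξ : ℝ} (hx1 : 0 < x1) (hξ : ξ < 0) :
    HasDerivAt (arctanTerm a x1) (√(-a / ξ) / (x1 - ξ)) ξ := by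
  have h := ((((hasDerivAt_neg ξ).sqrt (neg_pos.2 hξ).ne').div_const √x1).arctan).const_mul
    (-2 * (√a / √x1))
  refine h.congr_deriv ?_
  have ht : 0 < √(-ξ) := sqrt_pos.2 (neg_pos.2 hξ)
  have hc : 0 < √x1 := sqrt_pos.2 hx1
  have hξt : ξ = -√(-ξ) ^ 2 := by rw [sq_sqrt (neg_nonneg.2 hξ.le), neg_neg]
  have hx1c : x1 = √x1 ^ 2 := (sq_sqrt hx1.le).symm
  rw [sqrt_neg_div_eq hξ]
  generalize √(-ξ) = t at ht hξt ⊢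
  generalize √x1 = c at hc hx1c ⊢
  subst hξt hx1c
  have hct : c ^ 2 - -t ^ 2 ≠ 0 := by rw [sub_neg_eq_add]; positivity
  field_simp
  ring

theorem hasDerivAt_logTerm {a ξ : ℝ} (ha : 0 ≤ a) (hξ : ξ < 0) (hξa : ξ + a ≠ 0) :
    HasDerivAt (logTerm a) (√(-a / ξ) / (ξ + a)) ξ := by
  have ht : 0 < √(-ξ) := sqrt_pos.2 (neg_pos.2 hξ)
  have hst : 0 < √a + √(-ξ) := by positivity
  have hsqrt := ((hasDerivAt_neg ξ).sqrt (neg_pos.2 hξ).ne').const_add √a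
  have h := (((hasDerivAt_id' ξ).add_const a).log hξa).sub ((hsqrt.log hst.ne').const_mul 2)
  refine h.congr_deriv ?_
  have hξt : ξ = -√(-ξ) ^ 2 := by rw [sq_sqrt (neg_nonneg.2 hξ.le), neg_neg]
  have has : a = √a ^ 2 := (sq_sqrt ha).symm
  rw [sqrt_neg_div_eq hξ]
  generalize √(-ξ) = t at ht hst hξt ⊢
  generalize √a = s at hst has ⊢
  subst hξt has
  have hdiff : s - t ≠ 0 := fun h => hξa (by linear_combination (s + t) * h)
  field_simp
  ring

theorem arctanTerm_zero (a x1 : ℝ) : arctanTerm a x1 0 = 0 := by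
  simp [arctanTerm]

theorem logTerm_zero {a : ℝ} (ha : 0 ≤ a) : logTerm a 0 = 0 := by
  rw [logTerm, neg_zero, sqrt_zero, add_zero, zero_add, log_sqrt ha]
  ring

theorem tendsto_arctanTerm_atBot {a x1 : ℝ} (hx1 : 0 < x1) :
    Tendsto (arctanTerm a x1) atBot (𝓝 (-(π * (√a / √x1)))) := by
  have h : Tendsto (fun ξ => √(-ξ) / √x1) atBot atTop :=
    (tendsto_sqrt_atTop.comp tendsto_neg_atBot_atTop).atTop_div_const (sqrt_pos.2 hx1)
  rw [show -(π * (√a / √x1)) = -2 * (√a / √x1) * (π / 2) by ring]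
  exact ((tendsto_arctan_atTop.mono_right nhdsWithin_le_nhds).comp h).const_mul _

theorem logTerm_eq_log_neg_one_add {a ξ : ℝ} (ha : 0 < a) (hξ : ξ ≤ 0) (hξa : ξ + a ≠ 0) :
    logTerm a ξ = log (-1 + 2 * √a / (√a + √(-ξ))) := by
  have hst : 0 < √a + √(-ξ) := by positivity
  have hξt : ξ = -√(-ξ) ^ 2 := by rw [sq_sqrt (neg_nonneg.2 hξ), neg_neg]
  have has : a = √a ^ 2 := (sq_sqrt ha.le).symm
  have hq : -1 + 2 * √a / (√a + √(-ξ)) = (ξ + a) / (√a + √(-ξ)) ^ 2 := by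
    rw [hξt, has, sqrt_sq (sqrt_nonneg a), neg_neg, sqrt_sq (sqrt_nonneg _)]
    field_simp
    ring
  rw [hq, log_div hξa (pow_ne_zero 2 hst.ne'), log_pow, logTerm]
  push_cast
  ring

theorem tendsto_logTerm_atBot {a : ℝ} (ha : 0 < a) : Tendsto (logTerm a) atBot (𝓝 0) := by
  have hden : Tendsto (fun ξ => √a + √(-ξ)) atBot atTop :=
    tendsto_atTop_add_const_left _ _ (tendsto_sqrt_atTop.comp tendsto_neg_atBot_atTop)
  have hq : Tendsto (fun ξ => -1 + 2 * √a / (√a + √(-ξ))) atBot (𝓝 (-1)) := by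
    simpa using (tendsto_const_nhds.div_atTop hden).const_add (-1 : ℝ)
  have hlog := (continuousAt_log (by norm_num : (-1 : ℝ) ≠ 0)).tendsto.comp hq
  rw [log_neg_eq_log, log_one] at hlog
  refine hlog.congr' ?_
  filter_upwards [eventually_lt_atBot (-a)] with ξ hξ
  exact (logTerm_eq_log_neg_one_add ha (by linarith) (by linarith)).symm

noncomputable def tractionPrimitive (a x1 ξ : ℝ) : ℝ := (arctanTerm a x1 ξ + logTerm a ξ) / (x1 + a)

theorem hasDerivAt_tractionPrimitive {a x1 ξ : ℝ} (ha : 0 ≤ a) (hx1 : 0 < x1) (hξ : ξ < 0)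
    (hξa : ξ + a ≠ 0) :
    HasDerivAt (tractionPrimitive a x1) (√(-a / ξ) / ((x1 - ξ) * (ξ + a))) ξ := by
  refine (((hasDerivAt_arctanTerm hx1 hξ).add (hasDerivAt_logTerm ha hξ hξa)).div_const
    (x1 + a)).congr_deriv ?_
  have hx1ξ : x1 - ξ ≠ 0 := by linarith
  have hx1a : x1 + a ≠ 0 := by linarith
  field_simp
  ring

theorem continuousOn_tractionPrimitive {a x1 : ℝ} (ha : 0 < a) :
    ContinuousOn (tractionPrimitive a x1) (Iic 0 \ {-a}) := by
  intro ξ hξ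
  have hξa : ξ + a ≠ 0 := fun h => hξ.2 (by rw [mem_singleton_iff]; linarith)
  have hst : √a + √(-ξ) ≠ 0 := by positivity
  unfold tractionPrimitive arctanTerm logTerm
  refine ContinuousAt.continuousWithinAt ?_
  fun_prop (disch := assumption)

theorem tendsto_tractionPrimitive_jump {a x1 : ℝ} (ha : 0 < a) :
    Tendsto (fun ε => tractionPrimitive a x1 (-a - ε) - tractionPrimitive a x1 (-a + ε))
      (𝓝 0) (𝓝 0) := by
  have hst : √a + √(- -a) ≠ 0 := by positivity
  refine tendsto_sub_symm_of_eq_add_log (κ := 1 / (x1 + a))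
    (G := fun ξ => (arctanTerm a x1 ξ - 2 * log (√a + √(-ξ))) / (x1 + a)) ?_ ?_
  · unfold arctanTerm
    fun_prop (disch := assumption)
  · intro ξ
    rw [tractionPrimitive, logTerm, sub_neg_eq_add]
    ring

/-- Traction ahead of the crack tip in the Mode III point-force example: for `a > 0` and
`x₁ > 0`, the Cauchy principal value (with respect to the simple pole at `ξ = −a`) of
`∫_{−∞}^0 √(−a/ξ) / ((x₁−ξ)(ξ+a)) dξ` equals `π √(a/x₁)/(x₁+a)`. -/
theorem stmt13 (a x1 : ℝ) (ha : 0 < a) (hx1 : 0 < x1) :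
    Tendsto (fun ε : ℝ =>
        ∫ ξ in {ξ : ℝ | ξ < 0 ∧ ε < |ξ + a|},
          Real.sqrt (-a / ξ) / ((x1 - ξ) * (ξ + a)))
      (nhdsWithin 0 (Ioi 0))
      (nhds (Real.pi * Real.sqrt (a / x1) / (x1 + a))) := by
  have hL : Tendsto (tractionPrimitive a x1) atBot (𝓝 ((-(π * (√a / √x1)) + 0) / (x1 + a))) :=
    ((tendsto_arctanTerm_atBot hx1).add (tendsto_logTerm_atBot ha)).div_const _
  have hpv := tendsto_principalValue_of_hasDerivAt (neg_lt_zero.2 ha)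
    (continuousOn_tractionPrimitive ha)
    (fun ξ hξ => hasDerivAt_tractionPrimitive ha.le hx1 hξ.1
      fun h => hξ.2 (by rw [mem_singleton_iff]; linarith))
    (fun ξ hξ => div_nonpos_of_nonneg_of_nonpos (sqrt_nonneg _)
      (mul_nonpos_of_nonneg_of_nonpos (by linarith [mem_Iio.1 hξ]) (by linarith [mem_Iio.1 hξ])))
    (fun ξ hξ => div_nonneg (sqrt_nonneg _) (mul_nonneg (by linarith [hξ.2]) (by linarith [hξ.1])))
    hL ((tendsto_tractionPrimitive_jump ha).mono_left nhdsWithin_le_nhds)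
  simp only [sub_neg_eq_add] at hpv
  convert hpv using 2
  rw [tractionPrimitive, arctanTerm_zero, logTerm_zero ha.le, sqrt_div' a hx1.le]
  ring
end
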